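/- Under the EMFCQ assumption, there exists ε̄ > 0 such that for every ε ∈ (0, ε̄], every global minimum point of P(x; ε) = f(x) + (1/ε) Σ_i max{0, g_i(x)} over X ∩ Z is a global minimum point of f over F ∩ Z ∩ X, and conversely every global minimum point of f over F ∩ Z ∩ X is a global minimum point of P(·; ε) over X ∩ Z. -/

import Mathlib

/-!
If the claim failed, there would be penalty parameters `ε_k → 0` with infeasible global
minimizers `x_k` of `P(·; ε_k)` over `X ∩ Z`. By compactness a subsequence converges to some
`x̄ ∈ X ∩ Z`, which minimizes the total violation `∑ max 0 gᵢ` over `X ∩ Z` and lies on the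
boundary of `F`. The discrete alternative of EMFCQ at `x̄` contradicts that minimality. In the
continuous alternative, Hahn–Banach applied to the sublinear Clarke derivative turns the gradient
condition into `gᵢ°(x̄; s) < c < 0` for the active constraints; as the Clarke derivative is a
limsup over base points near `x̄`, every infeasible `x_k` close to `x̄` can be moved along `s` so
that the violation drops at rate `c` while `f` grows at rate at most `L_f ‖s‖`, and `P(·; ε_k)`
decreases once `ε_k < -c / L_f ‖s‖`. Once the minimizers of `P` are feasible, both inclusions
follow from `P = f` on `F`.
-/

open Filter

/-- The box `X = {x : l ≤ x ≤ u}`. -/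
def box (n : ℕ) (l u : Fin n → ℝ) : Set (Fin n → ℝ) :=
  {x | ∀ i, l i ≤ x i ∧ x i ≤ u i}

/-- The mixed-integer lattice `Z = {x : x_i ∈ ℤ for i ∈ Iz}`. -/
def latt (n : ℕ) (Iz : Finset (Fin n)) : Set (Fin n → ℝ) :=
  {x | ∀ i ∈ Iz, ∃ a : ℤ, x i = a}

/-- The cone `D^c(x)` of feasible continuous directions at `x` w.r.t. the box. -/
def Dc (n : ℕ) (Iz : Finset (Fin n)) (l u x : Fin n → ℝ) : Set (Fin n → ℝ) :=
  {s | (∀ i ∈ Iz, s i = 0) ∧ (∀ i, i ∉ Iz → x i = l i → 0 ≤ s i) ∧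
       (∀ i, i ∉ Iz → x i = u i → s i ≤ 0)}

/-- The set `D^z(x)` of feasible primitive discrete directions at `x`. -/
def Dz (n : ℕ) (Iz : Finset (Fin n)) (l u x : Fin n → ℝ) : Set (Fin n → ℤ) :=
  {d | Finset.gcd Iz (fun i => (d i).natAbs) = 1 ∧ (∀ i, i ∉ Iz → d i = 0) ∧
       (fun i => x i + (d i : ℝ)) ∈ box n l u ∩ latt n Iz}

/-- The discrete neighborhood `B^z(x)`. -/
def Bz (n : ℕ) (Iz : Finset (Fin n)) (l u x : Fin n → ℝ) : Set (Fin n → ℝ) :=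
  {y | ∃ d ∈ Dz n Iz l u x, y = fun i => x i + (d i : ℝ)}

/-- Clarke generalized directional derivative of `f` at `x` along `s`, with respect to the
continuous variables (the limsup is over `y_c → x_c`, `y_z = x_z`, `t ↓ 0`). -/
noncomputable def clarkeDeriv (n : ℕ) (Iz : Finset (Fin n)) (f : (Fin n → ℝ) → ℝ)
    (x s : Fin n → ℝ) : ℝ :=
  Filter.limsup (fun p : (Fin n → ℝ) × ℝ => (f (p.1 + p.2 • s) - f p.1) / p.2)
    ((nhds x ⊓ Filter.principal {y | ∀ i ∈ Iz, y i = x i}) ×ˢ nhdsWithin 0 (Set.Ioi 0))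

/-- Clarke–Jahn generalized directional derivative of `f` at `x` along `s`: the limsup is
additionally restricted to points `y ∈ S` and `y + t s ∈ S` (with `S = X ∩ Z`). -/
noncomputable def clarkeJahnDeriv (n : ℕ) (Iz : Finset (Fin n)) (S : Set (Fin n → ℝ))
    (f : (Fin n → ℝ) → ℝ) (x s : Fin n → ℝ) : ℝ :=
  Filter.limsup (fun p : (Fin n → ℝ) × ℝ => (f (p.1 + p.2 • s) - f p.1) / p.2)
    (((nhds x ⊓ Filter.principal {y | (∀ i ∈ Iz, y i = x i) ∧ y ∈ S}) ×ˢ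
        nhdsWithin 0 (Set.Ioi 0)) ⊓
      Filter.principal {p : (Fin n → ℝ) × ℝ | p.1 + p.2 • s ∈ S})

/-- Clarke generalized gradient of `f` at `x` with respect to the continuous variables. -/
noncomputable def clarkeGrad (n : ℕ) (Iz : Finset (Fin n)) (f : (Fin n → ℝ) → ℝ)
    (x : Fin n → ℝ) : Set (Fin n → ℝ) :=
  {v | (∀ i ∈ Iz, v i = 0) ∧
       ∀ s : Fin n → ℝ, (∀ i ∈ Iz, s i = 0) →
         (∑ j, s j * v j) ≤ clarkeDeriv n Iz f x s}

open Set Topology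

section BoundedLimsup

variable {γ : Type*} {F : Filter γ} {u : γ → ℝ} {K : ℝ}

theorem isBoundedUnder_le_of_abs_le (h : ∀ᶠ p in F, |u p| ≤ K) :
    IsBoundedUnder (· ≤ ·) F u :=
  isBoundedUnder_of_eventually_le (h.mono fun _ hp => (abs_le.1 hp).2)

theorem isBoundedUnder_ge_of_abs_le (h : ∀ᶠ p in F, |u p| ≤ K) :
    IsBoundedUnder (· ≥ ·) F u :=
  isBoundedUnder_of_eventually_ge (h.mono fun _ hp => (abs_le.1 hp).1)

theorem isCoboundedUnder_le_of_abs_le [F.NeBot] (h : ∀ᶠ p in F, |u p| ≤ K) :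
    IsCoboundedUnder (· ≤ ·) F u :=
  (isBoundedUnder_ge_of_abs_le h).isCoboundedUnder_le

theorem limsup_comp_le_of_tendsto [F.NeBot] {m : γ → γ} (hm : Tendsto m F F)
    (h : ∀ᶠ p in F, |u p| ≤ K) : limsup (u ∘ m) F ≤ limsup u F :=
  hm.limsup_comp_le_limsup (isCoboundedUnder_le_of_abs_le (u := u) (hm.eventually h))
    (isBoundedUnder_le_of_abs_le h)

end BoundedLimsup

theorem le_of_tendsto_penalty_minimizers {α ι : Type*} {S : Set α} {f p : α → ℝ} {fmin : ℝ}
    (hfmin : ∀ y ∈ S, fmin ≤ f y) {l : Filter ι} [l.NeBot] {ε : ι → ℝ} {x : ι → α}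
    (hε : ∀ k, 0 < ε k) (hεlim : Tendsto ε l (𝓝 0)) (hxS : ∀ k, x k ∈ S)
    (hmin : ∀ k, ∀ y ∈ S, f (x k) + (1 / ε k) * p (x k) ≤ f y + (1 / ε k) * p y)
    {pb : ℝ} (hp : Tendsto (fun k => p (x k)) l (𝓝 pb)) : ∀ y ∈ S, pb ≤ p y := by
  intro y hy
  have hbound : ∀ k, p (x k) ≤ p y + ε k * (f y - fmin) := fun k => by
    have h := mul_le_mul_of_nonneg_left (hmin k y hy) (hε k).le
    rw [mul_add, mul_add, ← mul_assoc, ← mul_assoc, mul_one_div_cancel (hε k).ne', one_mul,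
      one_mul] at h
    nlinarith [hε k, hfmin _ (hxS k)]
  simpa using le_of_tendsto_of_tendsto' hp
    (tendsto_const_nhds.add (hεlim.mul_const (f y - fmin))) hbound

section

variable {n m : ℕ} {Iz : Finset (Fin n)}

def SliceLipschitzWith (Iz : Finset (Fin n)) (L : ℝ) (f : (Fin n → ℝ) → ℝ) : Prop :=
  ∀ x y : Fin n → ℝ, (∀ i ∈ Iz, x i = y i) → |f x - f y| ≤ L * Real.sqrt (∑ i, (x i - y i) ^ 2)

def slice (Iz : Finset (Fin n)) (x : Fin n → ℝ) : Set (Fin n → ℝ) := {y | ∀ i ∈ Iz, y i = x i}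

noncomputable def diffQuot (g : (Fin n → ℝ) → ℝ) (s : Fin n → ℝ) (p : (Fin n → ℝ) × ℝ) : ℝ :=
  (g (p.1 + p.2 • s) - g p.1) / p.2

def contProj (Iz : Finset (Fin n)) : (Fin n → ℝ) →ₗ[ℝ] (Fin n → ℝ) :=
  LinearMap.pi fun j => if j ∈ Iz then 0 else LinearMap.proj j

theorem contProj_apply (v : Fin n → ℝ) (j : Fin n) :
    contProj Iz v j = if j ∈ Iz then 0 else v j := by
  by_cases hj : j ∈ Iz <;> simp [contProj, hj]

theorem contProj_apply_mem (v : Fin n → ℝ) {i : Fin n} (hi : i ∈ Iz) : contProj Iz v i = 0 := by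
  simp [contProj_apply, hi]

theorem contProj_eq_self {v : Fin n → ℝ} (hv : ∀ i ∈ Iz, v i = 0) : contProj Iz v = v := by
  funext j
  by_cases hj : j ∈ Iz <;> simp [contProj_apply, hj, hv]

def violation (g : Fin m → (Fin n → ℝ) → ℝ) (x : Fin n → ℝ) : ℝ := ∑ i, max 0 (g i x)

theorem violation_eq_zero {g : Fin m → (Fin n → ℝ) → ℝ} {x : Fin n → ℝ}
    (hx : ∀ i, g i x ≤ 0) : violation g x = 0 :=
  Finset.sum_eq_zero fun i _ => max_eq_left (hx i)

instance neBot_nhdsWithin_slice_prod (x : Fin n → ℝ) :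
    (𝓝[slice Iz x] x ×ˢ 𝓝[>] (0 : ℝ)).NeBot :=
  haveI : (𝓝[slice Iz x] x).NeBot :=
    mem_closure_iff_nhdsWithin_neBot.1 (subset_closure fun _ _ => rfl)
  Filter.prod_neBot.2 ⟨this, inferInstance⟩

theorem eventually_pos_snd (x : Fin n → ℝ) :
    ∀ᶠ p in 𝓝[slice Iz x] x ×ˢ 𝓝[>] (0 : ℝ), 0 < p.2 :=
  Eventually.prod_inr (eventually_mem_nhdsWithin (s := Ioi 0)) _

theorem tendsto_add_smul_nhdsWithin_slice (x : Fin n → ℝ) {s : Fin n → ℝ}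
    (hs : ∀ i ∈ Iz, s i = 0) :
    Tendsto (fun p : (Fin n → ℝ) × ℝ => p.1 + p.2 • s) (𝓝[slice Iz x] x ×ˢ 𝓝[>] (0 : ℝ))
      (𝓝[slice Iz x] x) := by
  refine tendsto_nhdsWithin_iff.2 ⟨?_, ?_⟩
  · have hcont : Continuous fun p : (Fin n → ℝ) × ℝ => p.1 + p.2 • s := by fun_prop
    simpa using (hcont.tendsto (x, 0)).mono_left
      (Filter.prod_mono nhdsWithin_le_nhds nhdsWithin_le_nhds |>.trans_eq (nhds_prod_eq).symm)
  · filter_upwards [Eventually.prod_inl (eventually_mem_nhdsWithin (s := slice Iz x)) _]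
      with p hp i hi
    simp [hs i hi, hp i hi]

theorem tendsto_translate (x : Fin n → ℝ) {s : Fin n → ℝ} (hs : ∀ i ∈ Iz, s i = 0) :
    Tendsto (fun p : (Fin n → ℝ) × ℝ => (p.1 + p.2 • s, p.2)) (𝓝[slice Iz x] x ×ˢ 𝓝[>] (0 : ℝ))
      (𝓝[slice Iz x] x ×ˢ 𝓝[>] (0 : ℝ)) :=
  (tendsto_add_smul_nhdsWithin_slice x hs).prodMk tendsto_snd

theorem tendsto_rescale (x : Fin n → ℝ) {c : ℝ} (hc : 0 < c) :
    Tendsto (fun p : (Fin n → ℝ) × ℝ => (p.1, c * p.2)) (𝓝[slice Iz x] x ×ˢ 𝓝[>] (0 : ℝ))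
      (𝓝[slice Iz x] x ×ˢ 𝓝[>] (0 : ℝ)) :=
  tendsto_fst.prodMk ((comap_mulLeft_nhdsGT_zero hc ▸ tendsto_comap).comp tendsto_snd)

theorem clarkeDeriv_eq_limsup (g : (Fin n → ℝ) → ℝ) (x s : Fin n → ℝ) :
    clarkeDeriv n Iz g x s = limsup (diffQuot g s) (𝓝[slice Iz x] x ×ˢ 𝓝[>] (0 : ℝ)) :=
  rfl

@[simp]
theorem clarkeDeriv_zero (g : (Fin n → ℝ) → ℝ) (x : Fin n → ℝ) : clarkeDeriv n Iz g x 0 = 0 := by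
  have h : diffQuot g (0 : Fin n → ℝ) = fun _ => 0 := by
    funext p
    simp [diffQuot]
  rw [clarkeDeriv_eq_limsup, h, limsup_const]

theorem slice_mem_nhdsWithin_latt {x : Fin n → ℝ} (hx : x ∈ latt n Iz) :
    slice Iz x ∈ 𝓝[latt n Iz] x := by
  refine mem_nhdsWithin.2 ⟨Metric.ball x 1, Metric.isOpen_ball, Metric.mem_ball_self one_pos, ?_⟩
  rintro y ⟨hyx, hy⟩ i hi
  obtain ⟨a, ha⟩ := hx i hi
  obtain ⟨b, hb⟩ := hy i hi
  have hdist : dist b a < 1 := by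
    rw [← Int.dist_cast_real, ← ha, ← hb]
    exact (dist_le_pi_dist y x i).trans_lt hyx
  rw [ha, hb, Int.cast_inj]
  by_contra hne
  exact (Int.pairwise_one_le_dist hne).not_gt hdist

theorem isCompact_box_inter_latt (l u : Fin n → ℝ) (Iz : Finset (Fin n)) :
    IsCompact (box n l u ∩ latt n Iz) := by
  have hbox : box n l u = Set.Icc l u := by
    ext x
    simp [box, Pi.le_def, forall_and]
  have hlatt : latt n Iz = ⋂ i ∈ Iz, (fun x : Fin n → ℝ => x i) ⁻¹' range ((↑) : ℤ → ℝ) := by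
    ext x
    simp [latt, eq_comm]
  rw [hbox, hlatt]
  exact isCompact_Icc.inter_right (isClosed_biInter fun i _ =>
    Int.isClosedEmbedding_coe_real.isClosed_range.preimage (continuous_apply i))

theorem add_smul_mem_latt {y s : Fin n → ℝ} (hy : y ∈ latt n Iz) (hs : ∀ i ∈ Iz, s i = 0)
    (t : ℝ) : y + t • s ∈ latt n Iz := fun i hi => by
  simpa [hs i hi] using hy i hi

theorem eventually_add_smul_mem_box {l u xb s : Fin n → ℝ} (hxb : xb ∈ box n l u)
    (hs : s ∈ Dc n Iz l u xb) :
    ∀ᶠ p in 𝓝[slice Iz xb] xb ×ˢ 𝓝[>] (0 : ℝ), p.1 ∈ box n l u → p.1 + p.2 • s ∈ box n l u := by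
  have hcoord : ∀ i, ∀ᶠ p in 𝓝[slice Iz xb] xb ×ˢ 𝓝[>] (0 : ℝ), l i ≤ p.1 i → p.1 i ≤ u i →
      l i ≤ p.1 i + p.2 * s i ∧ p.1 i + p.2 * s i ≤ u i := by
    intro i
    have hlim : Tendsto (fun p : (Fin n → ℝ) × ℝ => p.1 i + p.2 * s i)
        (𝓝[slice Iz xb] xb ×ˢ 𝓝[>] (0 : ℝ)) (𝓝 (xb i)) :=
      ((continuous_apply i).tendsto xb).comp
        ((tendsto_add_smul_nhdsWithin_slice xb hs.1).mono_right nhdsWithin_le_nhds)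
    have hnotin : s i ≠ 0 → i ∉ Iz := fun h hi => h (hs.1 i hi)
    rcases lt_trichotomy (s i) 0 with hsi | hsi | hsi
    · have hl : l i < xb i := (hxb i).1.lt_of_ne fun h =>
        hsi.not_ge (hs.2.1 i (hnotin hsi.ne) h.symm)
      filter_upwards [hlim.eventually (lt_mem_nhds hl), eventually_pos_snd xb]
        with p h hp _ hpu
      exact ⟨h.le, by nlinarith⟩
    · exact Eventually.of_forall fun p hpl hpu => by simp [hsi, hpl, hpu]
    · have hu : xb i < u i := (hxb i).2.lt_of_ne fun h =>
        hsi.not_ge (hs.2.2 i (hnotin hsi.ne') h)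
      filter_upwards [hlim.eventually (gt_mem_nhds hu), eventually_pos_snd xb]
        with p h hp hpl _
      exact ⟨by nlinarith, h.le⟩
  filter_upwards [eventually_all.2 hcoord] with p hp hp₁ i
  simpa using hp i (hp₁ i).1 (hp₁ i).2

namespace SliceLipschitzWith

variable {g : (Fin n → ℝ) → ℝ} {L : ℝ} {s : Fin n → ℝ}

theorem abs_sub_le (hg : SliceLipschitzWith Iz L g) (hs : ∀ i ∈ Iz, s i = 0) (y : Fin n → ℝ)
    {t : ℝ} (ht : 0 ≤ t) :
    |g (y + t • s) - g y| ≤ t * (L * Real.sqrt (∑ j, s j ^ 2)) := by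
  have h := hg (y + t • s) y fun j hj => by simp [hs j hj]
  have hsq : ∑ j, ((y + t • s) j - y j) ^ 2 = t ^ 2 * ∑ j, s j ^ 2 := by
    simp only [Pi.add_apply, Pi.smul_apply, smul_eq_mul, add_sub_cancel_left, Finset.mul_sum,
      mul_pow]
  rw [hsq, Real.sqrt_mul (sq_nonneg t), Real.sqrt_sq ht] at h
  linarith

theorem abs_diffQuot_le (hg : SliceLipschitzWith Iz L g) (hs : ∀ i ∈ Iz, s i = 0)
    (y : Fin n → ℝ) {t : ℝ} (ht : 0 < t) :
    |diffQuot g s (y, t)| ≤ L * Real.sqrt (∑ j, s j ^ 2) := by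
  rw [diffQuot, abs_div, abs_of_pos ht, div_le_iff₀ ht, mul_comm]
  exact hg.abs_sub_le hs y ht.le

theorem eventually_abs_diffQuot_le (hg : SliceLipschitzWith Iz L g) (hs : ∀ i ∈ Iz, s i = 0)
    (x : Fin n → ℝ) :
    ∀ᶠ p in 𝓝[slice Iz x] x ×ˢ 𝓝[>] (0 : ℝ), |diffQuot g s p| ≤ L * Real.sqrt (∑ j, s j ^ 2) :=
  (eventually_pos_snd x).mono fun p hp => hg.abs_diffQuot_le hs p.1 hp

theorem clarkeDeriv_smul_le (hg : SliceLipschitzWith Iz L g) (hs : ∀ i ∈ Iz, s i = 0)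
    {c : ℝ} (hc : 0 < c) (x : Fin n → ℝ) :
    clarkeDeriv n Iz g x (c • s) ≤ c * clarkeDeriv n Iz g x s := by
  set m := fun p : (Fin n → ℝ) × ℝ => (p.1, c * p.2)
  have hquot : diffQuot g (c • s) = (c * ·) ∘ (diffQuot g s ∘ m) := by
    funext p
    rcases eq_or_ne p.2 0 with hp | hp
    · simp [diffQuot, m, hp]
    · simp only [diffQuot, m, Function.comp, smul_smul, mul_comm p.2 c]
      field_simp
  have hbound : ∀ᶠ p in 𝓝[slice Iz x] x ×ˢ 𝓝[>] (0 : ℝ),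
      |(diffQuot g s ∘ m) p| ≤ L * Real.sqrt (∑ j, s j ^ 2) :=
    (tendsto_rescale x hc).eventually (hg.eventually_abs_diffQuot_le hs x)
  rw [clarkeDeriv_eq_limsup, clarkeDeriv_eq_limsup, hquot,
    ← (monotone_mul_left_of_nonneg hc.le).map_limsup_of_continuousAt _
      (continuous_const_mul c).continuousAt (isBoundedUnder_le_of_abs_le hbound)
      (isCoboundedUnder_le_of_abs_le hbound)]
  exact mul_le_mul_of_nonneg_left
    (limsup_comp_le_of_tendsto (tendsto_rescale x hc) (hg.eventually_abs_diffQuot_le hs x)) hc.le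

theorem clarkeDeriv_smul (hg : SliceLipschitzWith Iz L g) (hs : ∀ i ∈ Iz, s i = 0)
    {c : ℝ} (hc : 0 < c) (x : Fin n → ℝ) :
    clarkeDeriv n Iz g x (c • s) = c * clarkeDeriv n Iz g x s := by
  refine le_antisymm (hg.clarkeDeriv_smul_le hs hc x) ?_
  have h := hg.clarkeDeriv_smul_le (s := c • s) (fun i hi => by simp [hs i hi])
    (inv_pos.2 hc) x
  rw [inv_smul_smul₀ hc.ne'] at h
  rwa [← le_inv_mul_iff₀ hc]

theorem clarkeDeriv_add_le (hg : SliceLipschitzWith Iz L g) {s' : Fin n → ℝ}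
    (hs : ∀ i ∈ Iz, s i = 0) (hs' : ∀ i ∈ Iz, s' i = 0) (x : Fin n → ℝ) :
    clarkeDeriv n Iz g x (s + s') ≤ clarkeDeriv n Iz g x s + clarkeDeriv n Iz g x s' := by
  set m := fun p : (Fin n → ℝ) × ℝ => (p.1 + p.2 • s, p.2)
  have hquot : diffQuot g (s + s') = diffQuot g s + diffQuot g s' ∘ m := by
    funext p
    simp only [diffQuot, m, Pi.add_apply, Function.comp_apply, smul_add, ← add_assoc]
    rw [← add_div]
    ring_nf
  have hbound := (tendsto_translate x hs).eventually (hg.eventually_abs_diffQuot_le hs' x)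
  have hbound₀ := hg.eventually_abs_diffQuot_le hs x
  rw [clarkeDeriv_eq_limsup, clarkeDeriv_eq_limsup, clarkeDeriv_eq_limsup, hquot]
  refine (limsup_add_le (isBoundedUnder_ge_of_abs_le hbound₀)
    (isBoundedUnder_le_of_abs_le hbound₀) (isCoboundedUnder_le_of_abs_le hbound)
    (isBoundedUnder_le_of_abs_le hbound)).trans ?_
  exact add_le_add_right
    (limsup_comp_le_of_tendsto (tendsto_translate x hs) (hg.eventually_abs_diffQuot_le hs' x)) _

theorem exists_mem_clarkeGrad_eq (hg : SliceLipschitzWith Iz L g) (hs : ∀ i ∈ Iz, s i = 0)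
    (x : Fin n → ℝ) :
    ∃ ξ ∈ clarkeGrad n Iz g x, ∑ j, ξ j * s j = clarkeDeriv n Iz g x s := by
  classical
  -- `g°(x; ·)` is only controlled on directions with zero discrete part, hence the projection.
  set N : (Fin n → ℝ) → ℝ := fun v => clarkeDeriv n Iz g x (contProj Iz v)
  have hPz : ∀ v, ∀ i ∈ Iz, contProj Iz v i = 0 := fun v i hi => contProj_apply_mem v hi
  have hNs : N s = clarkeDeriv n Iz g x s := by simp only [N, contProj_eq_self hs]
  have hN_hom : ∀ c : ℝ, 0 < c → ∀ v, N (c • v) = c * N v := fun c hc v => by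
    simp only [N, map_smul, hg.clarkeDeriv_smul (hPz v) hc]
  have hN_add : ∀ v w, N (v + w) ≤ N v + N w := fun v w => by
    simpa only [N, map_add] using hg.clarkeDeriv_add_le (hPz v) (hPz w) x
  have hN_neg : -N s ≤ N (-s) := by
    have := hN_add s (-s)
    simp only [add_neg_cancel, N, map_zero, clarkeDeriv_zero] at this
    linarith
  have hspan : ∀ c : ℝ, c • s = 0 → c • N s = 0 := by
    intro c hcs
    rcases smul_eq_zero.1 hcs with hc | rfl
    · simp [hc]
    · simp [N]
  set f₀ : (Fin n → ℝ) →ₗ.[ℝ] ℝ := LinearPMap.mkSpanSingleton' s (N s) hspan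
  have hf₀ : ∀ v : f₀.domain, f₀ v ≤ N v := by
    rintro ⟨v, hv⟩
    obtain ⟨a, rfl⟩ := Submodule.mem_span_singleton.1 hv
    rw [LinearPMap.mkSpanSingleton'_apply, RingHom.id_apply, smul_eq_mul]
    change a * N s ≤ N (a • s)
    rcases lt_trichotomy a 0 with ha | rfl | ha
    · have h : N (a • s) = -a * N (-s) := by
        rw [← hN_hom _ (neg_pos.2 ha), smul_neg, neg_smul, neg_neg]
      nlinarith
    · simp [N]
    · rw [hN_hom a ha]
  obtain ⟨G, hGf₀, hGN⟩ := exists_extension_of_le_sublinear f₀ N hN_hom hN_add hf₀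
  set ξ : Fin n → ℝ := fun j => if j ∈ Iz then 0 else G fun k => if j = k then 1 else 0
  have hGξ : ∀ v, (∀ i ∈ Iz, v i = 0) → G v = ∑ j, v j * ξ j := by
    intro v hv
    rw [LinearMap.pi_apply_eq_sum_univ G v]
    refine Finset.sum_congr rfl fun j _ => ?_
    by_cases hj : j ∈ Iz <;> simp [ξ, hj, hv]
  refine ⟨ξ, ⟨fun i hi => if_pos hi, fun v hv => ?_⟩, ?_⟩
  · rw [← hGξ v hv]
    exact (hGN v).trans_eq (by simp only [N, contProj_eq_self hv])
  · have hGs : G s = N s :=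
      (hGf₀ ⟨s, Submodule.mem_span_singleton_self s⟩).trans
        (LinearPMap.mkSpanSingleton'_apply_self _ _ _ _)
    simp_rw [mul_comm (ξ _)]
    rw [← hGξ s hs, hGs, hNs]

theorem clarkeDeriv_neg (hg : SliceLipschitzWith Iz L g) (hs : ∀ i ∈ Iz, s i = 0)
    {x : Fin n → ℝ} (h : ∀ ξ ∈ clarkeGrad n Iz g x, ∑ j, ξ j * s j < 0) :
    clarkeDeriv n Iz g x s < 0 := by
  obtain ⟨ξ, hξ, hξs⟩ := hg.exists_mem_clarkeGrad_eq hs x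
  exact hξs ▸ h ξ hξ

theorem eventually_lt_of_clarkeDeriv_lt (hg : SliceLipschitzWith Iz L g)
    (hs : ∀ i ∈ Iz, s i = 0) {x : Fin n → ℝ} {c : ℝ} (h : clarkeDeriv n Iz g x s < c) :
    ∀ᶠ p in 𝓝[slice Iz x] x ×ˢ 𝓝[>] (0 : ℝ), g (p.1 + p.2 • s) < g p.1 + p.2 * c := by
  filter_upwards [eventually_lt_of_limsup_lt h
      (isBoundedUnder_le_of_abs_le (hg.eventually_abs_diffQuot_le hs x)),
    eventually_pos_snd x] with p hp hp₂
  have := (div_lt_iff₀ hp₂).1 hp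
  linarith

theorem continuousWithinAt_slice (hg : SliceLipschitzWith Iz L g) (x : Fin n → ℝ) :
    ContinuousWithinAt g (slice Iz x) x := by
  have hbound : Tendsto (fun y => L * Real.sqrt (∑ j, (y j - x j) ^ 2)) (𝓝[slice Iz x] x)
      (𝓝 0) := by
    have hcont : Continuous fun y : Fin n → ℝ => L * Real.sqrt (∑ j, (y j - x j) ^ 2) := by
      fun_prop
    simpa using (hcont.tendsto x).mono_left nhdsWithin_le_nhds
  refine tendsto_iff_norm_sub_tendsto_zero.2 (squeeze_zero' (Eventually.of_forall fun _ => ?_)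
    ?_ hbound)
  · exact norm_nonneg _
  · filter_upwards [self_mem_nhdsWithin] with y hy
    exact hg y x hy

theorem continuousOn_latt (hg : SliceLipschitzWith Iz L g) : ContinuousOn g (latt n Iz) :=
  fun x hx => (hg.continuousWithinAt_slice x).mono_of_mem_nhdsWithin (slice_mem_nhdsWithin_latt hx)

end SliceLipschitzWith

theorem continuousOn_violation {g : Fin m → (Fin n → ℝ) → ℝ} {Lg : Fin m → ℝ}
    (hg : ∀ i, SliceLipschitzWith Iz (Lg i) (g i)) : ContinuousOn (violation g) (latt n Iz) :=
  continuousOn_finsetSum _ fun i _ => continuousOn_const.sup (hg i).continuousOn_latt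

theorem eventually_violation_add_smul_le {g : Fin m → (Fin n → ℝ) → ℝ} {Lg : Fin m → ℝ}
    (hg : ∀ i, SliceLipschitzWith Iz (Lg i) (g i)) {xb s : Fin n → ℝ} (hs : ∀ i ∈ Iz, s i = 0)
    {c : ℝ} (hc : c < 0) (hdesc : ∀ i, 0 ≤ g i xb → clarkeDeriv n Iz (g i) xb s < c) :
    ∀ᶠ y in 𝓝[slice Iz xb] xb, (∃ i, 0 < g i y) →
      ∀ᶠ t in 𝓝[>] (0 : ℝ), violation g (y + t • s) ≤ violation g y + t * c := by
  have hterm : ∀ i, ∀ᶠ p in 𝓝[slice Iz xb] xb ×ˢ 𝓝[>] (0 : ℝ),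
      g i (p.1 + p.2 • s) < g i p.1 + p.2 * c ∨ (g i p.1 < 0 ∧ g i (p.1 + p.2 • s) < 0) := by
    intro i
    rcases le_or_gt 0 (g i xb) with hi | hi
    · exact ((hg i).eventually_lt_of_clarkeDeriv_lt hs (hdesc i hi)).mono fun _ => Or.inl
    · have hcont := (hg i).continuousWithinAt_slice xb
      filter_upwards [Eventually.prod_inl (hcont.eventually (gt_mem_nhds hi)) _,
        (hcont.tendsto.comp (tendsto_add_smul_nhdsWithin_slice xb hs)).eventually
          (gt_mem_nhds hi)] with p h₁ h₂ using Or.inr ⟨h₁, h₂⟩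
  filter_upwards [((eventually_all.2 hterm).and (eventually_pos_snd xb)).curry]
    with y hy ⟨i₀, hi₀⟩
  have hsmall : ∀ᶠ t in 𝓝[>] (0 : ℝ), t * -c < g i₀ y :=
    (((continuous_mul_const (-c)).tendsto' 0 0 (zero_mul _)).eventually
      (gt_mem_nhds hi₀)).filter_mono nhdsWithin_le_nhds
  filter_upwards [hy, hsmall] with t ⟨hdes, ht⟩ hti₀
  have hle : ∀ i, max 0 (g i (y + t • s)) ≤ max 0 (g i y) + if i = i₀ then t * c else 0 := by
    intro i
    rcases hdes i with h | ⟨h₁, h₂⟩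
    · split_ifs with hi
      · subst hi
        rw [max_eq_right hi₀.le]
        exact max_le (by nlinarith) h.le
      · rw [add_zero]
        exact max_le_max le_rfl (by nlinarith)
    · have hi : i ≠ i₀ := by
        rintro rfl
        exact h₁.not_gt hi₀
      rw [if_neg hi, add_zero, max_eq_left h₂.le]
      exact le_max_left _ _
  calc violation g (y + t • s)
      ≤ ∑ i, (max 0 (g i y) + if i = i₀ then t * c else 0) :=
        Finset.sum_le_sum fun i _ => hle i
    _ = violation g y + t * c := by simp [violation, Finset.sum_add_distrib]

theorem exists_forall_penalty_lt {f : (Fin n → ℝ) → ℝ} {g : Fin m → (Fin n → ℝ) → ℝ}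
    {Lf : ℝ} {Lg : Fin m → ℝ} (hf : SliceLipschitzWith Iz Lf f)
    (hg : ∀ i, SliceLipschitzWith Iz (Lg i) (g i)) {l u xb s : Fin n → ℝ}
    (hxb : xb ∈ box n l u) (hs : s ∈ Dc n Iz l u xb)
    (hneg : ∀ i, 0 ≤ g i xb → clarkeDeriv n Iz (g i) xb s < 0) :
    ∃ ε₀ > 0, ∀ᶠ y in 𝓝[slice Iz xb] xb, y ∈ box n l u ∩ latt n Iz → (∃ i, 0 < g i y) →
      ∀ ε, 0 < ε → ε < ε₀ → ∃ z ∈ box n l u ∩ latt n Iz,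
        f z + (1 / ε) * violation g z < f y + (1 / ε) * violation g y := by
  obtain ⟨c, hdesc, hc⟩ : ∃ c, (∀ i, 0 ≤ g i xb → clarkeDeriv n Iz (g i) xb s < c) ∧ c < 0 :=
    ((eventually_all.2 fun i => eventually_imp_distrib_left.2 fun hi =>
      nhdsWithin_le_nhds (lt_mem_nhds (hneg i hi))).and
      (self_mem_nhdsWithin : ∀ᶠ c in 𝓝[<] (0 : ℝ), c < 0)).exists
  set K := Lf * Real.sqrt (∑ j, s j ^ 2)
  refine ⟨-c / (|K| + 1), div_pos (neg_pos.2 hc) (by positivity), ?_⟩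
  filter_upwards [eventually_violation_add_smul_le hg hs.1 hc hdesc,
    (eventually_add_smul_mem_box hxb hs).curry] with y hviol hbox ⟨hyX, hyZ⟩ hinf ε hε hεlt
  obtain ⟨t, ⟨hvt, hbt⟩, ht⟩ := (((hviol hinf).and hbox).and self_mem_nhdsWithin).exists
  refine ⟨y + t • s, ⟨hbt hyX, add_smul_mem_latt hyZ hs.1 t⟩, ?_⟩
  have hft : f (y + t • s) ≤ f y + t * K := by
    linarith [le_abs_self (f (y + t • s) - f y), hf.abs_sub_le hs.1 y (le_of_lt ht)]
  have hrate : ε * K + c < 0 := by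
    have := (lt_div_iff₀ (by positivity)).1 hεlt
    nlinarith [le_abs_self K]
  have hεt : 0 < t / ε := div_pos ht hε
  calc f (y + t • s) + 1 / ε * violation g (y + t • s)
      ≤ f y + t * K + 1 / ε * (violation g y + t * c) := by gcongr
    _ = f y + 1 / ε * violation g y + t / ε * (ε * K + c) := by field_simp; ring
    _ < f y + 1 / ε * violation g y := by nlinarith

theorem exists_penalty_minimizers_feasible {f : (Fin n → ℝ) → ℝ} {g : Fin m → (Fin n → ℝ) → ℝ}
    {Lf : ℝ} {Lg : Fin m → ℝ} (hf : SliceLipschitzWith Iz Lf f)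
    (hg : ∀ i, SliceLipschitzWith Iz (Lg i) (g i)) {l u : Fin n → ℝ}
    (hEMFCQ : ∀ x ∈ box n l u ∩ latt n Iz,
      x ∉ interior {y : Fin n → ℝ | ∀ i, g i y ≤ 0} →
      (∃ s ∈ Dc n Iz l u x, ∀ i, 0 ≤ g i x →
          ∀ ξ ∈ clarkeGrad n Iz (g i) x, (∑ j, ξ j * s j) < 0) ∨
      (∃ d ∈ Dz n Iz l u x, violation g (fun j => x j + (d j : ℝ)) < violation g x)) :
    ∃ εbar > (0 : ℝ), ∀ ε : ℝ, 0 < ε → ε ≤ εbar → ∀ x ∈ box n l u ∩ latt n Iz,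
      (∀ y ∈ box n l u ∩ latt n Iz, f x + (1 / ε) * violation g x ≤ f y + (1 / ε) * violation g y) →
      ∀ i, g i x ≤ 0 := by
  set S := box n l u ∩ latt n Iz
  by_contra! hcon
  choose ε hε hεle x hxS hmin hinf using fun k : ℕ => hcon (1 / ((k : ℝ) + 1)) (by positivity)
  obtain ⟨xb, hxb, φ, hφ, hconv⟩ := (isCompact_box_inter_latt l u Iz).tendsto_subseq hxS
  have hεlim : Tendsto (fun k => ε (φ k)) atTop (𝓝 0) :=
    (squeeze_zero (fun k => (hε k).le) hεle tendsto_one_div_add_atTop_nhds_zero_nat).comp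
      hφ.tendsto_atTop
  have hconvZ : Tendsto (fun k => x (φ k)) atTop (𝓝[latt n Iz] xb) :=
    tendsto_nhdsWithin_iff.2 ⟨hconv, Eventually.of_forall fun k => (hxS (φ k)).2⟩
  have hconvS : Tendsto (fun k => x (φ k)) atTop (𝓝[slice Iz xb] xb) :=
    hconvZ.mono_right (nhdsWithin_le_of_mem (slice_mem_nhdsWithin_latt hxb.2))
  obtain ⟨xm, -, hxm⟩ := (isCompact_box_inter_latt l u Iz).exists_isMinOn ⟨xb, hxb⟩
    (hf.continuousOn_latt.mono inter_subset_right)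
  have hviol : ∀ y ∈ S, violation g xb ≤ violation g y :=
    le_of_tendsto_penalty_minimizers hxm (fun k => hε (φ k)) hεlim (fun k => hxS (φ k))
      (fun k => hmin (φ k)) ((continuousOn_violation hg xb hxb.2).tendsto.comp hconvZ)
  have hnotint : xb ∉ interior {y : Fin n → ℝ | ∀ i, g i y ≤ 0} := by
    rw [← mem_compl_iff, ← closure_compl]
    exact mem_closure_of_tendsto hconv (Eventually.of_forall fun k hk =>
      (hinf (φ k)).elim fun i hi => (hk i).not_gt hi)
  rcases hEMFCQ xb hxb hnotint with ⟨s, hs, hgrad⟩ | ⟨d, hd, hlt⟩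
  · obtain ⟨ε₀, hε₀, hev⟩ := exists_forall_penalty_lt hf hg hxb.1 hs
      fun i hi => (hg i).clarkeDeriv_neg hs.1 (hgrad i hi)
    obtain ⟨k, hk, hεk⟩ := ((hconvS.eventually hev).and (hεlim.eventually (gt_mem_nhds hε₀))).exists
    obtain ⟨z, hz, hlt⟩ := hk (hxS (φ k)) (hinf (φ k)) _ (hε (φ k)) hεk
    exact (hmin (φ k) z hz).not_gt hlt
  · exact (hviol _ hd.2.2).not_gt hlt

theorem penalty_le_of_isMinOn_feasible {f : (Fin n → ℝ) → ℝ} {g : Fin m → (Fin n → ℝ) → ℝ}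
    {Lf : ℝ} {Lg : Fin m → ℝ} (hf : SliceLipschitzWith Iz Lf f)
    (hg : ∀ i, SliceLipschitzWith Iz (Lg i) (g i)) {l u : Fin n → ℝ} {ε : ℝ}
    (hfeas : ∀ x ∈ box n l u ∩ latt n Iz, (∀ y ∈ box n l u ∩ latt n Iz,
      f x + (1 / ε) * violation g x ≤ f y + (1 / ε) * violation g y) → ∀ i, g i x ≤ 0)
    {x : Fin n → ℝ} (hx : x ∈ box n l u ∩ latt n Iz) (hxF : ∀ i, g i x ≤ 0)
    (hxmin : ∀ y ∈ box n l u ∩ latt n Iz, (∀ i, g i y ≤ 0) → f x ≤ f y) :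
    ∀ y ∈ box n l u ∩ latt n Iz,
      f x + (1 / ε) * violation g x ≤ f y + (1 / ε) * violation g y := by
  have hP : ContinuousOn (fun y => f y + (1 / ε) * violation g y) (box n l u ∩ latt n Iz) :=
    (hf.continuousOn_latt.add (continuousOn_const.mul (continuousOn_violation hg))).mono
      inter_subset_right
  obtain ⟨x', hx', hx'min⟩ := (isCompact_box_inter_latt l u Iz).exists_isMinOn ⟨x, hx⟩ hP
  have hx'F := hfeas x' hx' fun y hy => hx'min hy
  intro y hy
  calc f x + 1 / ε * violation g x = f x := by simp [violation_eq_zero hxF]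
    _ ≤ f x' := hxmin x' hx' hx'F
    _ = f x' + 1 / ε * violation g x' := by simp [violation_eq_zero hx'F]
    _ ≤ f y + 1 / ε * violation g y := hx'min hy

end

theorem penalty_global_minima_equivalence_general
    (n m : ℕ) (Iz : Finset (Fin n)) (l u : Fin n → ℝ)
    (f : (Fin n → ℝ) → ℝ) (g : Fin m → (Fin n → ℝ) → ℝ) (Lf : ℝ) (Lg : Fin m → ℝ)
    (hf : ∀ x y : Fin n → ℝ, (∀ i ∈ Iz, x i = y i) →
      |f x - f y| ≤ Lf * Real.sqrt (∑ i, (x i - y i) ^ 2))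
    (hg : ∀ i, ∀ x y : Fin n → ℝ, (∀ j ∈ Iz, x j = y j) →
      |g i x - g i y| ≤ Lg i * Real.sqrt (∑ j, (x j - y j) ^ 2))
    (hEMFCQ : ∀ x ∈ box n l u ∩ latt n Iz,
      x ∉ interior {y : Fin n → ℝ | ∀ i, g i y ≤ 0} →
      (∃ s ∈ Dc n Iz l u x, ∀ i, 0 ≤ g i x →
          ∀ ξ ∈ clarkeGrad n Iz (g i) x, (∑ j, ξ j * s j) < 0) ∨
      (∃ d ∈ Dz n Iz l u x,
          (∑ i, max 0 (g i (fun j => x j + (d j : ℝ)))) < ∑ i, max 0 (g i x))) :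
    ∃ εbar > (0 : ℝ), ∀ ε : ℝ, 0 < ε → ε ≤ εbar →
      (∀ x ∈ box n l u ∩ latt n Iz,
        (∀ y ∈ box n l u ∩ latt n Iz,
            f x + (1 / ε) * ∑ i, max 0 (g i x) ≤ f y + (1 / ε) * ∑ i, max 0 (g i y)) →
        ((∀ i, g i x ≤ 0) ∧
          ∀ y ∈ box n l u ∩ latt n Iz, (∀ i, g i y ≤ 0) → f x ≤ f y)) ∧
      (∀ x ∈ box n l u ∩ latt n Iz, (∀ i, g i x ≤ 0) →
        (∀ y ∈ box n l u ∩ latt n Iz, (∀ i, g i y ≤ 0) → f x ≤ f y) →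
        ∀ y ∈ box n l u ∩ latt n Iz,
          f x + (1 / ε) * ∑ i, max 0 (g i x) ≤ f y + (1 / ε) * ∑ i, max 0 (g i y)) := by
  obtain ⟨εbar, hεbar, hfeas⟩ := exists_penalty_minimizers_feasible hf hg hEMFCQ
  refine ⟨εbar, hεbar, fun ε hε hεle => ⟨fun x hx hmin => ?_,
    fun x hx hxF hxmin => penalty_le_of_isMinOn_feasible hf hg (hfeas ε hε hεle) hx hxF hxmin⟩⟩
  have hxF := hfeas ε hε hεle x hx hmin
  refine ⟨hxF, fun y hy hyF => ?_⟩
  have h : f x + (1 / ε) * violation g x ≤ f y + (1 / ε) * violation g y := hmin y hy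
  simpa [violation_eq_zero hxF, violation_eq_zero hyF] using h

/-- under EMFCQ, there is `ε̄ > 0` such that for every `ε ∈ (0, ε̄]` the
global minimum points of the penalty `P(·;ε)` over `X ∩ Z` and those of `f` over
`F ∩ Z ∩ X` coincide. -/
theorem penalty_global_minima_equivalence
    (n m : ℕ) (Iz : Finset (Fin n)) (l u : Fin n → ℝ) (hlu : ∀ i, l i < u i)
    (f : (Fin n → ℝ) → ℝ) (g : Fin m → (Fin n → ℝ) → ℝ) (Lf : ℝ) (Lg : Fin m → ℝ)
    (hf : ∀ x y : Fin n → ℝ, (∀ i ∈ Iz, x i = y i) →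
      |f x - f y| ≤ Lf * Real.sqrt (∑ i, (x i - y i) ^ 2))
    (hg : ∀ i, ∀ x y : Fin n → ℝ, (∀ j ∈ Iz, x j = y j) →
      |g i x - g i y| ≤ Lg i * Real.sqrt (∑ j, (x j - y j) ^ 2))
    (hEMFCQ : ∀ x ∈ box n l u ∩ latt n Iz,
      x ∉ interior {y : Fin n → ℝ | ∀ i, g i y ≤ 0} →
      (∃ s ∈ Dc n Iz l u x, ∀ i, 0 ≤ g i x →
          ∀ ξ ∈ clarkeGrad n Iz (g i) x, (∑ j, ξ j * s j) < 0) ∨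
      (∃ d ∈ Dz n Iz l u x,
          (∑ i, max 0 (g i (fun j => x j + (d j : ℝ)))) < ∑ i, max 0 (g i x))) :
    ∃ εbar > (0 : ℝ), ∀ ε : ℝ, 0 < ε → ε ≤ εbar →
      (∀ x ∈ box n l u ∩ latt n Iz,
        (∀ y ∈ box n l u ∩ latt n Iz,
            f x + (1 / ε) * ∑ i, max 0 (g i x) ≤ f y + (1 / ε) * ∑ i, max 0 (g i y)) →
        ((∀ i, g i x ≤ 0) ∧
          ∀ y ∈ box n l u ∩ latt n Iz, (∀ i, g i y ≤ 0) → f x ≤ f y)) ∧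
      (∀ x ∈ box n l u ∩ latt n Iz, (∀ i, g i x ≤ 0) →
        (∀ y ∈ box n l u ∩ latt n Iz, (∀ i, g i y ≤ 0) → f x ≤ f y) →
        ∀ y ∈ box n l u ∩ latt n Iz,
          f x + (1 / ε) * ∑ i, max 0 (g i x) ≤ f y + (1 / ε) * ∑ i, max 0 (g i y)) :=
  penalty_global_minima_equivalence_general n m Iz l u f g Lf Lg hf hg hEMFCQ
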